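/- arXiv:1809.00280 — 3 statements merged into one kernel-verified Lean document; each statement's English description precedes it below -/
import Mathlib

section
/- Suppose the base of an admissible word W of an S-machine is Q_i Q_{i+1}, and consider a reduced computation starting with W ≡ q_i u q_{i+1} and ending with W' ≡ q_i' u' q_{i+1}' such that each rule of the computation multiplies the Q_i Q_{i+1}-sector by a letter on the left (respectively, on the right), and different rules multiply that sector by different letters. Then: (a) the history of the computation is a copy of the reduced form of the word u' u^{-1} read from right to left (respectively, of the word u^{-1} u' read from left to right); in particular, if u ≡ u' then the computation is empty; (b) the length of the history H of the computation does not exceed ||u|| + ||u'||; (c) for every configuration q_i'' u'' q_{i+1}'' of the computation, ||u''|| ≤ max(||u||, ||u'||). -/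
set_option linter.unusedSectionVars false

namespace SM


variable {Y : Type} [DecidableEq Y]

lemma reduce_eq_self (L : List (Y × Bool))
    (h : L.Chain' fun a b => ¬(a.1 = b.1 ∧ a.2 = !b.2)) : FreeGroup.reduce L = L := by
  induction L with
  | nil => rfl
  | cons a L ih =>
    rw [FreeGroup.reduce.cons, ih h.tail]
    cases L with
    | nil => rfl
    | cons b tl =>
      dsimp only
      rw [if_neg (List.isChain_cons_cons.1 h).1]

lemma chain'_of_reduce_eq_self (L : List (Y × Bool)) (h : FreeGroup.reduce L = L) :
    L.Chain' fun a b => ¬(a.1 = b.1 ∧ a.2 = !b.2) := by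
  induction L with
  | nil => exact List.isChain_nil
  | cons a L ih =>
    have hlen : (FreeGroup.reduce L).length ≤ L.length :=
      (FreeGroup.Red.sublist FreeGroup.reduce.red).length_le
    rw [FreeGroup.reduce.cons] at h
    cases hr : FreeGroup.reduce L with
    | nil =>
      rw [hr] at h
      have : L = [] := by
        have := congrArg List.length h
        simp at this
        exact this
      subst this
      exact List.isChain_singleton _
    | cons b tl =>
      rw [hr] at h
      dsimp only at h
      by_cases hc : a.1 = b.1 ∧ a.2 = !b.2
      · rw [if_pos hc] at h
        exfalso
        have h1 := congrArg List.length h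
        have h2 := congrArg List.length hr
        simp at h1 h2
        omega
      · rw [if_neg hc] at h
        have hL : L = b :: tl := by
          injection h with _ h2
          exact h2.symm
        rw [hL]
        exact List.isChain_cons_cons.2 ⟨hc, hL ▸ ih (hr.trans hL.symm)⟩

lemma chain'_toWord (x : FreeGroup Y) :
    x.toWord.Chain' fun a b => ¬(a.1 = b.1 ∧ a.2 = !b.2) :=
  chain'_of_reduce_eq_self _ (FreeGroup.reduce_toWord x)

lemma inv_mk_singleton (l : Y × Bool) :
    (FreeGroup.mk [l])⁻¹ = FreeGroup.mk [(l.1, !l.2)] := by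
  rw [FreeGroup.inv_mk]
  simp [FreeGroup.invRev]

lemma mul_letter_cases (x : FreeGroup Y) (l : Y × Bool) :
    (x * FreeGroup.mk [l]).toWord = x.toWord ++ [l] ∨
      x.toWord = (x * FreeGroup.mk [l]).toWord ++ [(l.1, !l.2)] := by
  have hch := chain'_toWord x
  by_cases hlast : x.toWord.getLast? = some (l.1, !l.2)
  · right
    have hsplit : x.toWord.dropLast ++ [(l.1, !l.2)] = x.toWord :=
      List.dropLast_append_getLast? _ hlast
    have hxl : x * FreeGroup.mk [l] = FreeGroup.mk x.toWord.dropLast := by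
      conv_lhs => rw [← FreeGroup.mk_toWord (x := x), ← hsplit]
      rw [← FreeGroup.mul_mk, ← inv_mk_singleton]
      group
    have hchd : x.toWord.dropLast.Chain' fun a b => ¬(a.1 = b.1 ∧ a.2 = !b.2) := by
      rw [← hsplit] at hch
      exact (List.isChain_append.1 hch).1
    rw [hxl, FreeGroup.toWord_mk, reduce_eq_self _ hchd, hsplit]
  · left
    have hxl : x * FreeGroup.mk [l] = FreeGroup.mk (x.toWord ++ [l]) := by
      conv_lhs => rw [← FreeGroup.mk_toWord (x := x)]
      rw [FreeGroup.mul_mk]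
    have hchl : (x.toWord ++ [l]).Chain' fun a b => ¬(a.1 = b.1 ∧ a.2 = !b.2) := by
      refine List.isChain_append.2 ⟨hch, List.isChain_singleton _, ?_⟩
      intro a ha b hb hab
      simp at hb
      subst hb
      apply hlast
      have : a = (l.1, !l.2) := by
        obtain ⟨a1, a2⟩ := a
        obtain ⟨h1, h2⟩ := hab
        simp_all
      rwa [this] at ha
    rw [hxl, FreeGroup.toWord_mk, reduce_eq_self _ hchl]


lemma valley (t : ℕ) (n : ℕ → ℕ)
    (h1 : ∀ i < t, n (i+1) = n i + 1 ∨ n i = n (i+1) + 1)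
    (h2 : ∀ i, i + 1 < t → n (i+1) = n i + 1 → n (i+2) = n (i+1) + 1) :
    ∀ i ≤ t, n i ≤ max (n 0) (n t) := by
  have aux : ∀ k i, i + 1 + k = t → n (i+1) = n i + 1 → n (i+1) ≤ n t := by
    intro k
    induction k with
    | zero =>
      intro i h _
      have : i + 1 = t := by omega
      rw [this]
    | succ k ih =>
      intro i h hinc
      have h2' := h2 i (by omega) hinc
      have h3 := ih (i+1) (by omega) (by have e : i + 1 + 1 = i + 2 := rfl; rw [e]; exact h2')
      have e : n (i + 1 + 1) = n (i + 2) := rfl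
      omega
  intro i
  induction i with
  | zero => intro _; exact le_max_left _ _
  | succ i ih =>
    intro hi
    rcases h1 i (by omega) with hA | hB
    · exact le_trans (aux (t - (i+1)) i (by omega) hA) (le_max_right _ _)
    · have := ih (by omega)
      omega

lemma right_case {Y R : Type} [DecidableEq Y]
    (ℓ : R → Y × Bool) (hinj : Function.Injective ℓ)
    (inv : R → R) (hinv : ∀ r, ℓ (inv r) = ((ℓ r).1, !(ℓ r).2))
    (t : ℕ) (u : Fin (t + 1) → FreeGroup Y) (hist : Fin t → R)
    (hred : ∀ (i : ℕ) (hi : i + 1 < t),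
      hist ⟨i + 1, hi⟩ ≠ inv (hist ⟨i, Nat.lt_of_succ_lt hi⟩))
    (hstep : ∀ i : Fin t, u i.succ = u i.castSucc * FreeGroup.mk [ℓ (hist i)]) :
    (List.ofFn hist).map ℓ = ((u 0)⁻¹ * u (Fin.last t)).toWord ∧
    (t ≤ (u 0).toWord.length + (u (Fin.last t)).toWord.length) ∧
    (∀ i : Fin (t + 1),
      (u i).toWord.length ≤ max (u 0).toWord.length (u (Fin.last t)).toWord.length) := by
  -- consecutive rule letters are never mutually inverse
  have hletters : ∀ (i : ℕ) (hi : i + 1 < t),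
      ¬((ℓ (hist ⟨i, by omega⟩)).1 = (ℓ (hist ⟨i+1, hi⟩)).1 ∧
        (ℓ (hist ⟨i, by omega⟩)).2 = !(ℓ (hist ⟨i+1, hi⟩)).2) := by
    intro i hi h
    apply hred i hi
    apply hinj
    rw [hinv]
    obtain ⟨h1, h2⟩ := h
    refine Prod.ext h1.symm ?_
    rw [h2, Bool.not_not]
  set L : List (Y × Bool) := (List.ofFn hist).map ℓ with hL
  have hLlen : L.length = t := by simp [hL]
  have hLget : ∀ (k : ℕ) (hk : k < t), L[k]'(by omega) = ℓ (hist ⟨k, hk⟩) := by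
    intro k hk
    simp [hL]
  have hchL : L.Chain' fun a b => ¬(a.1 = b.1 ∧ a.2 = !b.2) := by
    rw [hL, List.map_ofFn, List.Chain', List.isChain_ofFn]
    intro i hi
    exact hletters i hi
  -- the product formula
  have hprod : ∀ (k : ℕ) (hk : k ≤ t),
      (u 0)⁻¹ * u ⟨k, by omega⟩ = FreeGroup.mk (L.take k) := by
    intro k
    induction k with
    | zero =>
      intro _
      have h0 : (⟨0, by omega⟩ : Fin (t+1)) = 0 := rfl
      rw [h0]
      simp [FreeGroup.one_eq_mk]
    | succ k ih =>
      intro hk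
      have hkt : k < t := by omega
      have hs := hstep ⟨k, hkt⟩
      have e1 : (⟨k, hkt⟩ : Fin t).succ = (⟨k+1, by omega⟩ : Fin (t+1)) := rfl
      have e2 : (⟨k, hkt⟩ : Fin t).castSucc = (⟨k, by omega⟩ : Fin (t+1)) := rfl
      rw [e1, e2] at hs
      rw [hs, ← mul_assoc, ih (by omega)]
      rw [FreeGroup.mul_mk]
      congr 1
      rw [List.take_succ]
      congr 1
      have : L[k]? = some (L[k]'(by omega)) := List.getElem?_eq_getElem (by omega)
      rw [this, hLget k hkt]
      rfl
  have hfull : (u 0)⁻¹ * u (Fin.last t) = FreeGroup.mk L := by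
    have := hprod t le_rfl
    rwa [List.take_of_length_le (by omega)] at this
  have parta : L = ((u 0)⁻¹ * u (Fin.last t)).toWord := by
    rw [hfull, FreeGroup.toWord_mk, reduce_eq_self _ hchL]
  refine ⟨parta, ?_, ?_⟩
  · have hsub := FreeGroup.toWord_mul_sublist (u 0)⁻¹ (u (Fin.last t))
    have := hsub.length_le
    rw [← parta] at this
    rw [List.length_append, FreeGroup.toWord_inv, FreeGroup.invRev_length] at this
    omega
  · -- part (c)
    set n : ℕ → ℕ :=
      fun k => (u ⟨min k t, Nat.lt_succ_of_le (min_le_right k t)⟩).toWord.length with hn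
    have hnk : ∀ (k : ℕ) (hk : k ≤ t), n k = (u ⟨k, by omega⟩).toWord.length := by
      intro k hk
      have e : (⟨min k t, Nat.lt_succ_of_le (min_le_right k t)⟩ : Fin (t+1))
          = ⟨k, by omega⟩ := Fin.ext (min_eq_left hk)
      show (u ⟨min k t, Nat.lt_succ_of_le (min_le_right k t)⟩).toWord.length = _
      rw [e]
    -- step dichotomy in terms of words
    have hcase : ∀ (i : ℕ) (hi : i < t),
        (u ⟨i+1, by omega⟩).toWord
            = (u ⟨i, by omega⟩).toWord ++ [ℓ (hist ⟨i, hi⟩)] ∨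
        (u ⟨i, by omega⟩).toWord
            = (u ⟨i+1, by omega⟩).toWord ++ [((ℓ (hist ⟨i, hi⟩)).1, !(ℓ (hist ⟨i, hi⟩)).2)] := by
      intro i hi
      have hs := hstep ⟨i, hi⟩
      have e1 : (⟨i, hi⟩ : Fin t).succ = (⟨i+1, by omega⟩ : Fin (t+1)) := rfl
      have e2 : (⟨i, hi⟩ : Fin t).castSucc = (⟨i, by omega⟩ : Fin (t+1)) := rfl
      rw [e1, e2] at hs
      rw [hs]
      exact mul_letter_cases _ _
    have h1 : ∀ i < t, n (i+1) = n i + 1 ∨ n i = n (i+1) + 1 := by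
      intro i hi
      rw [hnk (i+1) (by omega), hnk i (by omega)]
      rcases hcase i hi with h | h
      · left; rw [h]; simp
      · right; rw [h]; simp
    have h2 : ∀ i, i + 1 < t → n (i+1) = n i + 1 → n (i+2) = n (i+1) + 1 := by
      intro i hi hincr
      have hApp : (u ⟨i+1, by omega⟩).toWord
          = (u ⟨i, by omega⟩).toWord ++ [ℓ (hist ⟨i, by omega⟩)] := by
        rcases hcase i (by omega) with h | h
        · exact h
        · exfalso
          rw [hnk (i+1) (by omega), hnk i (by omega)] at hincr
          rw [h] at hincr
          simp only [List.length_append, List.length_cons, List.length_nil] at hincr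
          omega
      rcases hcase (i+1) hi with h | h
      · have e : n (i+2) = n (i+1+1) := rfl
        rw [e, hnk (i+1+1) (by omega), hnk (i+1) (by omega), h]
        simp only [List.length_append, List.length_cons, List.length_nil]
      · exfalso
        have hlast1 : (u ⟨i+1, by omega⟩).toWord.getLast?
            = some (ℓ (hist ⟨i, by omega⟩)) := by
          rw [hApp, List.getLast?_concat]
        have hlast2 : (u ⟨i+1, by omega⟩).toWord.getLast?
            = some ((ℓ (hist ⟨i+1, hi⟩)).1, !(ℓ (hist ⟨i+1, hi⟩)).2) := by
          rw [h, List.getLast?_concat]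
        rw [hlast1] at hlast2
        apply hletters i hi
        have he : ℓ (hist ⟨i, by omega⟩)
            = ((ℓ (hist ⟨i+1, hi⟩)).1, !(ℓ (hist ⟨i+1, hi⟩)).2) :=
          Option.some_injective _ hlast2
        exact ⟨by rw [he], by rw [he]⟩
    have hv := valley t n h1 h2
    intro i
    have := hv i.1 (by omega)
    have e0 : n 0 = (u 0).toWord.length := hnk 0 (by omega)
    have et : n t = (u (Fin.last t)).toWord.length := hnk t le_rfl
    have ei : n i.1 = (u i).toWord.length := hnk i.1 (by omega)
    rw [e0, et, ei] at this
    exact this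


end SM


/-- Lemma `gen`.  A computation of an `S`-machine with base `Q_i Q_{i+1}` is modelled by
the evolution of the (reduced) tape word `u` of its single sector, an element of the free
group on the tape alphabet `Y`.  The hypothesis that every rule multiplies the sector by a
single letter on the left (resp. on the right) is encoded by the map `ℓ` assigning to each
rule the letter (an element of `Y^{±1}`, i.e. of `Y × Bool`) it inserts; different rules
multiply the sector by different letters (`ℓ` is injective), rules come in mutually
inverse pairs (`inv`), and the computation is reduced (`hred`). -/

theorem sMachine_one_sector_one_letter
    {Y R : Type} [DecidableEq Y]
    (ℓ : R → Y × Bool) (hinj : Function.Injective ℓ)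
    (inv : R → R) (hinv : ∀ r, ℓ (inv r) = ((ℓ r).1, !(ℓ r).2))
    (t : ℕ) (u : Fin (t + 1) → FreeGroup Y) (hist : Fin t → R)
    (hred : ∀ (i : ℕ) (hi : i + 1 < t),
      hist ⟨i + 1, hi⟩ ≠ inv (hist ⟨i, by omega⟩))
    (hstep :
      (∀ i : Fin t, u i.succ = FreeGroup.mk [ℓ (hist i)] * u i.castSucc) ∨
      (∀ i : Fin t, u i.succ = u i.castSucc * FreeGroup.mk [ℓ (hist i)])) :
    -- (a) the history is a copy of the reduced form of `u' u⁻¹` read from right to left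
    -- (resp. of `u⁻¹ u'` read from left to right); in particular if `u ≡ u'` the
    -- computation is empty
    ((∀ i : Fin t, u i.succ = FreeGroup.mk [ℓ (hist i)] * u i.castSucc) →
        ((List.ofFn hist).map ℓ).reverse = (u (Fin.last t) * (u 0)⁻¹).toWord) ∧
    ((∀ i : Fin t, u i.succ = u i.castSucc * FreeGroup.mk [ℓ (hist i)]) →
        (List.ofFn hist).map ℓ = ((u 0)⁻¹ * u (Fin.last t)).toWord) ∧
    (u 0 = u (Fin.last t) → t = 0) ∧
    -- (b) `‖H‖ ≤ ‖u‖ + ‖u'‖`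
    (t ≤ (u 0).toWord.length + (u (Fin.last t)).toWord.length) ∧
    -- (c) `‖u''‖ ≤ max (‖u‖, ‖u'‖)` for every configuration of the computation
    (∀ i : Fin (t + 1),
      (u i).toWord.length ≤ max (u 0).toWord.length (u (Fin.last t)).toWord.length) := by
  have hinvinv : ∀ r, inv (inv r) = r := by
    intro r
    apply hinj
    rw [hinv, hinv, Bool.not_not]
  have hredinv : ∀ (i : ℕ) (hi : i + 1 < t),
      (fun j => inv (hist j)) ⟨i + 1, hi⟩
        ≠ inv ((fun j => inv (hist j)) ⟨i, by omega⟩) := by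
    intro i hi h
    apply hred i hi
    have h2 := congrArg inv h
    simp only [hinvinv] at h2
    exact h2
  have keyL := fun (hs : ∀ i : Fin t, u i.succ = FreeGroup.mk [ℓ (hist i)] * u i.castSucc) =>
    SM.right_case ℓ hinj inv hinv t (fun j => (u j)⁻¹) (fun j => inv (hist j)) hredinv
      (fun i => by
        show (u i.succ)⁻¹ = (u i.castSucc)⁻¹ * FreeGroup.mk [ℓ (inv (hist i))]
        rw [hs i, mul_inv_rev, SM.inv_mk_singleton, ← hinv])
  have huinv : ∀ j : Fin (t + 1), ((u j)⁻¹).toWord.length = (u j).toWord.length := by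
    intro j
    rw [FreeGroup.toWord_inv, FreeGroup.invRev_length]
  have hmapneg : (List.ofFn fun j => inv (hist j)).map ℓ
      = ((List.ofFn hist).map ℓ).map (fun p : Y × Bool => (p.1, !p.2)) := by
    rw [List.map_ofFn, List.map_ofFn, List.map_ofFn]
    congr 1
    funext j
    exact hinv (hist j)
  refine ⟨?_, ?_, ?_, ?_, ?_⟩
  · -- left case of (a)
    intro hs
    have hA := (keyL hs).1
    simp only [inv_inv] at hA
    rw [hmapneg] at hA
    have h1 : (u (Fin.last t) * (u 0)⁻¹).toWord
        = FreeGroup.invRev ((u 0 * (u (Fin.last t))⁻¹).toWord) := by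
      rw [← FreeGroup.toWord_inv]
      congr 1
      rw [mul_inv_rev, inv_inv]
    rw [h1, ← hA, FreeGroup.invRev, List.map_map]
    congr 1
    have : ((fun g : Y × Bool => (g.1, !g.2)) ∘ fun p : Y × Bool => (p.1, !p.2)) = id := by
      funext p
      simp
    rw [this, List.map_id]
  · -- right case of (a)
    intro hs
    exact (SM.right_case ℓ hinj inv hinv t u hist hred hs).1
  · -- (a) consequence: u = u' implies empty computation
    intro heq
    have hlen : ((List.ofFn hist).map ℓ).length = t := by simp
    rcases hstep with hs | hs
    · have hA := (keyL hs).1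
      simp only [inv_inv] at hA
      rw [hmapneg] at hA
      have hone : u 0 * (u (Fin.last t))⁻¹ = 1 := by
        rw [heq, mul_inv_cancel]
      rw [hone, FreeGroup.toWord_one] at hA
      have := congrArg List.length hA
      simp at this
      omega
    · have hA := (SM.right_case ℓ hinj inv hinv t u hist hred hs).1
      have hone : (u 0)⁻¹ * u (Fin.last t) = 1 := by
        rw [heq, inv_mul_cancel]
      rw [hone, FreeGroup.toWord_one] at hA
      have := congrArg List.length hA
      simp at this
      omega
  · -- (b)
    rcases hstep with hs | hs
    · have hB := (keyL hs).2.1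
      rwa [huinv 0, huinv (Fin.last t)] at hB
    · exact (SM.right_case ℓ hinj inv hinv t u hist hred hs).2.1
  · -- (c)
    rcases hstep with hs | hs
    · intro i
      have hC := (keyL hs).2.2 i
      rwa [huinv 0, huinv (Fin.last t), huinv i] at hC
    · exact (SM.right_case ℓ hinj inv hinv t u hist hred hs).2.2
end

section
/- Suppose a reduced computation W_0 → W_1 → … → W_t of an S-machine S satisfying property (*) has a 2-letter base and history of the form H ≡ H_1 H_2^k H_3 with k ≥ 0. Then for the Y-projection w_i of W_i (for every i = 0, 1, …, t) one has ||w_i|| ≤ ||w_0|| + ||w_t|| + 2||H_1|| + 3||H_2|| + 2||H_3||. -/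
/-!
With a 2-letter base a rule `r` acts on the `Y`-projection by `w ↦ a r * w * b r`, so by
property (*) each step changes `‖w‖` by at most 2; this bounds `‖w_i‖` along `H₁` and `H₃`.
After `q` periods of `H₂^k` the projection is `A^q w B^q`, where `A` and `B` are the products
over one period, so `‖A‖, ‖B‖ ≤ ‖H₂‖`. Conjugating `A` and `B` to cyclically reduced `a` and `b`,
the sequence `q ↦ ‖a^q y b^q‖` is convex, because `2‖v‖ ≤ ‖a v b‖ + ‖a⁻¹ v b⁻¹‖` in a free group;
this follows from the cancellation formula `‖x⁻¹ y‖ = ‖x‖ + ‖y‖ - 2 (x | y)` and the ultrametric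
inequality for the Gromov product `(x | y)` in the Cayley tree. A convex sequence is bounded by
its endpoints, so the lengths at the ends of the periods exceed the larger of those at the ends of
`H₂^k` by at most `‖A‖ + ‖B‖ ≤ 2‖H₂‖`. A point inside a period is at most `‖H₂‖ / 2` steps from
an end of it, which accounts for the last `‖H₂‖`.
-/

namespace List

variable {β : Type*} [DecidableEq β]

def commonPrefixLength : List β → List β → ℕ
  | x :: l, y :: l' => if x = y then commonPrefixLength l l' + 1 else 0
  | _, _ => 0

@[simp]
theorem commonPrefixLength_nil_left (l : List β) : commonPrefixLength [] l = 0 := rfl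

@[simp]
theorem commonPrefixLength_nil_right (l : List β) : commonPrefixLength l [] = 0 := by
  cases l <;> rfl

theorem commonPrefixLength_cons_cons (x y : β) (l l' : List β) :
    commonPrefixLength (x :: l) (y :: l') = if x = y then commonPrefixLength l l' + 1 else 0 :=
  rfl

theorem commonPrefixLength_comm :
    ∀ l l' : List β, commonPrefixLength l l' = commonPrefixLength l' l
  | [], _ => by simp
  | _ :: _, [] => by simp
  | x :: l, y :: l' => by
    simp only [commonPrefixLength_cons_cons, commonPrefixLength_comm l l', eq_comm]

theorem commonPrefixLength_le_length_left : ∀ l l' : List β, commonPrefixLength l l' ≤ l.length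
  | [], _ => by simp
  | _ :: _, [] => by simp
  | x :: l, y :: l' => by
    have := commonPrefixLength_le_length_left l l'
    rw [commonPrefixLength_cons_cons]
    split <;> simp [this]

theorem min_commonPrefixLength_le :
    ∀ l₁ l₂ l₃ : List β,
      min (commonPrefixLength l₁ l₂) (commonPrefixLength l₂ l₃) ≤ commonPrefixLength l₁ l₃
  | [], _, _ => by simp
  | _ :: _, [], _ => by simp
  | _ :: _, _ :: _, [] => by simp
  | x :: l₁, y :: l₂, z :: l₃ => by
    have := min_commonPrefixLength_le l₁ l₂ l₃
    simp only [commonPrefixLength_cons_cons]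
    by_cases hxy : x = y
    · subst hxy
      by_cases hxz : x = z
      · subst hxz
        simp only [if_true]
        omega
      · simp [hxz]
    · simp [hxy]

end List

section ConvexSequence

variable {M : Type*} [AddCommMonoid M] [LinearOrder M] [IsOrderedCancelAddMonoid M]

theorem le_max_endpoints_of_two_nsmul_le_add {f : ℕ → M}
    (hf : ∀ n, 2 • f (n + 1) ≤ f n + f (n + 2)) : ∀ {m n : ℕ}, m ≤ n → f m ≤ max (f 0) (f n)
  | _, 0, hm => by rw [Nat.le_zero.1 hm]; exact le_max_left _ _
  | m, n + 1, hm => by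
    have hn : f n ≤ max (f 0) (f (n + 1)) := by
      cases n with
      | zero => exact le_max_left _ _
      | succ n =>
        rcases le_or_gt (f n) (f (n + 1)) with h | h
        · refine le_max_of_le_right (le_of_add_le_add_left (a := f (n + 1)) ?_)
          calc f (n + 1) + f (n + 1) = 2 • f (n + 1) := (two_nsmul _).symm
            _ ≤ f n + f (n + 2) := hf n
            _ ≤ f (n + 1) + f (n + 2) := add_le_add_left h _
        · rcases le_max_iff.1 (le_max_endpoints_of_two_nsmul_le_add hf n.le_succ) with h' | h'
          · exact le_max_of_le_left (h.le.trans h')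
          · exact absurd h' (not_le.2 h)
    rcases hm.eq_or_lt with rfl | hm
    · exact le_max_right _ _
    · exact (le_max_endpoints_of_two_nsmul_le_add hf (Nat.le_of_lt_succ hm)).trans
        (max_le (le_max_left _ _) hn)

end ConvexSequence

namespace FreeGroup

open List

variable {α : Type*} [DecidableEq α] {L : List (α × Bool)} {x : FreeGroup α}

theorem IsReduced.invRev (h : IsReduced L) : IsReduced (invRev L) := by
  rw [isReduced_iff_reduce_eq, reduce_invRev, h.reduce_eq]

theorem isReduced_invRev_cons_append_cons {x y : α × Bool} {L₁ L₂ : List (α × Bool)}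
    (h₁ : IsReduced (x :: L₁)) (h₂ : IsReduced (y :: L₂)) (hxy : x ≠ y) :
    IsReduced (invRev (x :: L₁) ++ y :: L₂) := by
  rw [invRev_cons]
  refine IsReduced.append_overlap (by simpa [← invRev_cons] using h₁.invRev) ?_
    (by simp [invRev])
  simp only [invRev, map_cons, map_nil, reverse_cons, reverse_nil, nil_append, cons_append,
    isReduced_cons_cons]
  exact ⟨fun h => by grind [Prod.ext_iff], h₂⟩

theorem length_reduce_invRev_append_add_two_mul_commonPrefixLength :
    ∀ {L₁ L₂ : List (α × Bool)}, IsReduced L₁ → IsReduced L₂ →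
      (reduce (invRev L₁ ++ L₂)).length + 2 * commonPrefixLength L₁ L₂ = L₁.length + L₂.length
  | [], L₂, _, h₂ => by simp [invRev_empty, h₂.reduce_eq]
  | L₁, [], h₁, _ => by simp [h₁.invRev.reduce_eq, invRev_length]
  | x :: L₁, y :: L₂, h₁, h₂ => by
    rw [commonPrefixLength_cons_cons]
    split_ifs with hxy
    · subst hxy
      have hcancel : reduce (invRev (x :: L₁) ++ x :: L₂) = reduce (invRev L₁ ++ L₂) := by
        have hword :
            invRev (x :: L₁) ++ x :: L₂ = invRev L₁ ++ (x.1, !x.2) :: (x.1, x.2) :: L₂ := by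
          simp [invRev]
        rw [hword]
        exact reduce.Step.eq Red.Step.not_rev
      have := length_reduce_invRev_append_add_two_mul_commonPrefixLength
        (h₁.infix (suffix_cons x L₁).isInfix) (h₂.infix (suffix_cons x L₂).isInfix)
      simp only [hcancel, length_cons]
      omega
    · rw [(isReduced_invRev_cons_append_cons h₁ h₂ hxy).reduce_eq]
      simp [invRev_length]

/-- The Gromov product `(x | y)` based at `1` in the Cayley tree of the free group. -/
def gromovProduct (x y : FreeGroup α) : ℕ :=
  commonPrefixLength x.toWord y.toWord

theorem norm_inv_mul_add_two_mul_gromovProduct (x y : FreeGroup α) :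
    norm (x⁻¹ * y) + 2 * gromovProduct x y = norm x + norm y := by
  rw [norm, toWord_mul, toWord_inv]
  exact length_reduce_invRev_append_add_two_mul_commonPrefixLength isReduced_toWord
    isReduced_toWord

theorem norm_mul_add_two_mul_gromovProduct (x y : FreeGroup α) :
    norm (x * y) + 2 * gromovProduct x⁻¹ y = norm x + norm y := by
  simpa using norm_inv_mul_add_two_mul_gromovProduct x⁻¹ y

theorem gromovProduct_comm (x y : FreeGroup α) : gromovProduct x y = gromovProduct y x :=
  commonPrefixLength_comm _ _

theorem gromovProduct_le_norm_left (x y : FreeGroup α) : gromovProduct x y ≤ norm x :=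
  commonPrefixLength_le_length_left _ _

theorem gromovProduct_le_norm_right (x y : FreeGroup α) : gromovProduct x y ≤ norm y :=
  gromovProduct_comm x y ▸ gromovProduct_le_norm_left y x

theorem min_gromovProduct_le (x y z : FreeGroup α) :
    min (gromovProduct x y) (gromovProduct y z) ≤ gromovProduct x z :=
  min_commonPrefixLength_le _ _ _

theorem gromovProduct_self_inv_eq_zero (h : IsCyclicallyReduced x.toWord) :
    gromovProduct x x⁻¹ = 0 := by
  rw [gromovProduct, toWord_inv]
  obtain hx | ⟨L, y, hx⟩ := x.toWord.eq_nil_or_concat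
  · simp [hx]
  rw [hx, concat_eq_append] at h ⊢
  obtain ⟨z, L', hzL⟩ := exists_cons_of_ne_nil (append_ne_nil_of_right_ne_nil L (cons_ne_nil y []))
  have hzy : z ≠ (y.1, !y.2) := by
    rintro rfl
    simpa using h.2 y (by simp) (y.1, !y.2) (by simp [hzL]) rfl
  rw [invRev_append, hzL]
  simp [invRev, commonPrefixLength_cons_cons, hzy]

theorem exists_conj_isCyclicallyReduced (x : FreeGroup α) :
    ∃ c y : FreeGroup α, x = c * y * c⁻¹ ∧ IsCyclicallyReduced y.toWord ∧
      2 * norm c + norm y = norm x := by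
  have hsplit := reduceCyclically.conj_conjugator_reduceCyclically x.toWord
  have hc : IsReduced (reduceCyclically.conjugator x.toWord) :=
    isReduced_toWord.infix ⟨[], _, by rw [nil_append, ← append_assoc, hsplit]⟩
  have hy := reduceCyclically.isCyclicallyReduced (isReduced_toWord (x := x))
  refine ⟨mk (reduceCyclically.conjugator x.toWord), mk (reduceCyclically x.toWord), ?_, ?_, ?_⟩
  · rw [inv_mk, mul_mk, mul_mk, hsplit, mk_toWord]
  · rwa [toWord_mk, hy.isReduced.reduce_eq]
  · rw [norm, norm, norm, toWord_mk, toWord_mk, hc.reduce_eq, hy.isReduced.reduce_eq]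
    conv_rhs => rw [← hsplit]
    simp [invRev_length]
    omega

theorem two_mul_norm_le_of_gromovProduct_eq_zero {a b v : FreeGroup α}
    (hb : gromovProduct b b⁻¹ = 0) (hav : gromovProduct a v = 0) :
    2 * norm v ≤ norm (a * v * b) + norm (a⁻¹ * v * b⁻¹) := by
  have e₀ := norm_inv_mul_add_two_mul_gromovProduct a v
  have e₁ := norm_mul_add_two_mul_gromovProduct a v
  have e₂ := norm_mul_add_two_mul_gromovProduct (a * v) b
  have e₃ := norm_mul_add_two_mul_gromovProduct (a⁻¹ * v) b⁻¹
  have h₁ := gromovProduct_le_norm_left a⁻¹ v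
  have h₂ := gromovProduct_le_norm_right (a * v)⁻¹ b
  have h₃ := gromovProduct_le_norm_right (a⁻¹ * v)⁻¹ b⁻¹
  simp only [norm_inv_eq] at e₃ h₁ h₃
  rcases (gromovProduct_le_norm_right a⁻¹ v).eq_or_lt with hfull | hpart
  · -- `v` is a prefix of `a⁻¹`, so it cancels completely in `a * v`.
    have := gromovProduct_le_norm_left (a * v)⁻¹ b
    rw [norm_inv_eq] at this
    omega
  · -- `a * v` and `a⁻¹ * v` end with the same letter of `v`, which cannot cancel against both `b`
    -- and `b⁻¹`, since these start with different letters.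
    have hlast : 1 ≤ gromovProduct (a * v)⁻¹ (a⁻¹ * v)⁻¹ := by
      have h := norm_inv_mul_add_two_mul_gromovProduct (a * v)⁻¹ (a⁻¹ * v)⁻¹
      rw [show ((a * v)⁻¹)⁻¹ * (a⁻¹ * v)⁻¹ = a * a by group, norm_inv_eq, norm_inv_eq] at h
      have := norm_mul_le a a
      omega
    have := gromovProduct_comm b (a * v)⁻¹
    have := min_gromovProduct_le b (a * v)⁻¹ (a⁻¹ * v)⁻¹
    have := min_gromovProduct_le b (a⁻¹ * v)⁻¹ b⁻¹
    omega

theorem two_mul_norm_le_norm_mul_mul_add_norm_inv_mul_mul_inv {a b : FreeGroup α}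
    (ha : gromovProduct a a⁻¹ = 0) (hb : gromovProduct b b⁻¹ = 0) (v : FreeGroup α) :
    2 * norm v ≤ norm (a * v * b) + norm (a⁻¹ * v * b⁻¹) := by
  -- `a` and `a⁻¹` start with different letters, so `v` starts like at most one of them.
  by_cases hav : gromovProduct a v = 0
  · exact two_mul_norm_le_of_gromovProduct_eq_zero hb hav
  · have := min_gromovProduct_le a v a⁻¹
    have hav' : gromovProduct a⁻¹ v = 0 := by rw [gromovProduct_comm]; omega
    have hb' : gromovProduct b⁻¹ b⁻¹⁻¹ = 0 := by rwa [inv_inv, gromovProduct_comm]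
    simpa [add_comm] using two_mul_norm_le_of_gromovProduct_eq_zero hb' hav'

theorem norm_mul_mul_le (x y z : FreeGroup α) : norm (x * y * z) ≤ norm x + norm y + norm z :=
  (norm_mul_le _ _).trans (Nat.add_le_add_right (norm_mul_le _ _) _)

theorem norm_list_prod_le_length {l : List (FreeGroup α)} (hl : ∀ x ∈ l, norm x ≤ 1) :
    norm l.prod ≤ l.length := by
  induction l with
  | nil => simp
  | cons x l ih =>
    have := norm_mul_le x l.prod
    have := hl x mem_cons_self
    have := ih fun y hy => hl y (mem_cons_of_mem x hy)
    simp only [prod_cons, length_cons]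
    omega

theorem norm_pow_mul_mul_pow_le (A B x : FreeGroup α) {m n : ℕ} (hmn : m ≤ n) :
    norm (A ^ m * x * B ^ m) ≤ max (norm x) (norm (A ^ n * x * B ^ n)) + norm A + norm B := by
  obtain ⟨c, a, rfl, ha, hA⟩ := exists_conj_isCyclicallyReduced A
  obtain ⟨d, b, rfl, hb, hB⟩ := exists_conj_isCyclicallyReduced B
  set y := c⁻¹ * x * d with hy
  have hconj (k : ℕ) :
      (c * a * c⁻¹) ^ k * x * (d * b * d⁻¹) ^ k = c * (a ^ k * y * b ^ k) * d⁻¹ := by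
    rw [conj_pow, conj_pow, hy]
    group
  have hconvex (k : ℕ) : 2 • norm (a ^ (k + 1) * y * b ^ (k + 1)) ≤
      norm (a ^ k * y * b ^ k) + norm (a ^ (k + 2) * y * b ^ (k + 2)) := by
    rw [smul_eq_mul,
      show a ^ (k + 2) * y * b ^ (k + 2) = a * (a ^ (k + 1) * y * b ^ (k + 1)) * b by group,
      show a ^ k * y * b ^ k = a⁻¹ * (a ^ (k + 1) * y * b ^ (k + 1)) * b⁻¹ by group]
    exact (two_mul_norm_le_norm_mul_mul_add_norm_inv_mul_mul_inv
      (gromovProduct_self_inv_eq_zero ha) (gromovProduct_self_inv_eq_zero hb) _).trans_eq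
      (add_comm _ _)
  have hmax := le_max_endpoints_of_two_nsmul_le_add
    (f := fun k => norm (a ^ k * y * b ^ k)) hconvex hmn
  have hm := norm_mul_mul_le c (a ^ m * y * b ^ m) d⁻¹
  have h₀ : norm y ≤ norm c⁻¹ + norm x + norm d := norm_mul_mul_le c⁻¹ x d
  have hn := norm_mul_mul_le c⁻¹ (c * (a ^ n * y * b ^ n) * d⁻¹) d
  rw [show c⁻¹ * (c * (a ^ n * y * b ^ n) * d⁻¹) * d = a ^ n * y * b ^ n by group] at hn
  rw [hconj, hconj]
  simp only [norm_inv_eq, pow_zero, one_mul, mul_one] at hm h₀ hn hmax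
  omega

end FreeGroup

section Computation

open List

variable {G R : Type*} [Group G]

def IsComputation (a b : R → G) (h : List R) (w : ℕ → G) : Prop :=
  ∀ j (hj : j < h.length), w (j + 1) = a h[j] * w j * b h[j]

namespace IsComputation

variable {a b : R → G} {h h₁ h₂ : List R} {w : ℕ → G}

theorem append_left (hw : IsComputation a b (h₁ ++ h₂) w) : IsComputation a b h₁ w :=
  fun j hj => by
    have hj' : j < (h₁ ++ h₂).length := by rw [length_append]; omega
    rw [hw j hj', getElem_append_left hj]

theorem append_right (hw : IsComputation a b (h₁ ++ h₂) w) :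
    IsComputation a b h₂ (fun j => w (h₁.length + j)) :=
  fun j hj => by
    have hj' : h₁.length + j < (h₁ ++ h₂).length := by rw [length_append]; omega
    simp only [← add_assoc, hw _ hj', getElem_append_right (Nat.le_add_right _ _),
      Nat.add_sub_cancel_left]

theorem eq_prod (hw : IsComputation a b h w) :
    w h.length = (h.map a).reverse.prod * w 0 * (h.map b).prod := by
  induction h using List.reverseRecOn with
  | nil => simp
  | append_singleton h r ih =>
    have hstep := hw h.length (by simp)
    simp only [getElem_append_right le_rfl, Nat.sub_self, getElem_singleton] at hstep
    rw [length_append, length_singleton, hstep, ih hw.append_left]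
    simp [mul_assoc]

theorem eq_pow_mul_mul_pow {L : List R} {k q : ℕ}
    (hw : IsComputation a b (replicate k L).flatten w) (hq : q ≤ k) :
    w (q * L.length) = (L.map a).reverse.prod ^ q * w 0 * (L.map b).prod ^ q := by
  obtain ⟨m, rfl⟩ := Nat.exists_eq_add_of_le hq
  rw [replicate_add, flatten_append] at hw
  replace hw := hw.append_left
  clear hq
  induction q with
  | zero => simp
  | succ q ih =>
    rw [replicate_succ', flatten_concat] at hw
    have hlast := hw.append_right.eq_prod
    simp only [length_flatten, map_replicate, sum_replicate, smul_eq_mul, add_zero] at hlast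
    rw [Nat.succ_mul, hlast, ih hw.append_left, pow_succ', pow_succ]
    group

end IsComputation

end Computation

namespace IsComputation

open FreeGroup List

variable {α R : Type*} [DecidableEq α] {a b : R → FreeGroup α} {h : List R}
  {w : ℕ → FreeGroup α}

theorem norm_le_norm_add_two_mul_sub (hab : ∀ r, norm (a r) ≤ 1 ∧ norm (b r) ≤ 1)
    (hw : IsComputation a b h w) {i j : ℕ} (hij : i ≤ j) (hj : j ≤ h.length) :
    norm (w j) ≤ norm (w i) + 2 * (j - i) ∧ norm (w i) ≤ norm (w j) + 2 * (j - i) := by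
  induction j, hij using Nat.le_induction with
  | base => simp
  | succ j hij ih =>
    have hstep := hw j (by omega)
    have hfwd := norm_mul_mul_le (a h[j]) (w j) (b h[j])
    have hbwd : norm (w j) ≤ norm (a h[j]) + norm (w (j + 1)) + norm (b h[j]) :=
      calc norm (w j) = norm ((a h[j])⁻¹ * w (j + 1) * (b h[j])⁻¹) := by
            rw [hstep]; congr 1; group
        _ ≤ norm (a h[j]) + norm (w (j + 1)) + norm (b h[j]) := by
            simpa only [norm_inv_eq] using norm_mul_mul_le (a h[j])⁻¹ (w (j + 1)) (b h[j])⁻¹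
    rw [← hstep] at hfwd
    have := hab h[j]
    have := ih (by omega)
    omega

theorem norm_le_max_of_flatten_replicate (hab : ∀ r, norm (a r) ≤ 1 ∧ norm (b r) ≤ 1)
    {L : List R} {k i : ℕ} (hw : IsComputation a b (replicate k L).flatten w)
    (hi : i ≤ k * L.length) :
    norm (w i) ≤ max (norm (w 0)) (norm (w (k * L.length))) + 3 * L.length := by
  have hlen : ((replicate k L).flatten).length = k * L.length := by simp
  have hA : norm (L.map a).reverse.prod ≤ L.length := by
    simpa using norm_list_prod_le_length (l := (L.map a).reverse)
      (by simpa using fun r _ => (hab r).1)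
  have hB : norm (L.map b).prod ≤ L.length := by
    simpa using norm_list_prod_le_length (l := L.map b) (by simpa using fun r _ => (hab r).2)
  have hperiod {q : ℕ} (hq : q ≤ k) :
      norm (w (q * L.length)) ≤ max (norm (w 0)) (norm (w (k * L.length))) + 2 * L.length := by
    have := norm_pow_mul_mul_pow_le (L.map a).reverse.prod (L.map b).prod (w 0) hq
    rw [← hw.eq_pow_mul_mul_pow hq, ← hw.eq_pow_mul_mul_pow le_rfl] at this
    omega
  rcases Nat.eq_zero_or_pos L.length with hL | hL
  · simp [hL, Nat.le_zero.1 (hL ▸ hi : i ≤ k * 0)]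
  rcases hi.eq_or_lt with rfl | hi
  · have := hperiod le_rfl
    omega
  -- `i` lies in the period `q`, at most `L.length / 2` steps from one of its ends.
  set q := i / L.length
  have hq : q < k := Nat.div_lt_of_lt_mul (by rwa [mul_comm])
  have hqi : q * L.length ≤ i := Nat.div_mul_le_self i L.length
  have hiq : i < (q + 1) * L.length := by
    rw [mul_comm]; exact Nat.lt_mul_div_succ i hL
  have hqk : (q + 1) * L.length ≤ k * L.length := Nat.mul_le_mul_right _ hq
  have hleft := (hw.norm_le_norm_add_two_mul_sub hab hqi (by omega)).1
  have hright := (hw.norm_le_norm_add_two_mul_sub hab hiq.le (by omega)).2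
  have := hperiod hq.le
  have := hperiod hq
  rw [Nat.succ_mul] at hiq hright this
  omega

theorem norm_le_of_append_flatten_replicate_append
    (hab : ∀ r, norm (a r) ≤ 1 ∧ norm (b r) ≤ 1) {H₁ H₂ H₃ : List R} {k i : ℕ}
    (hw : IsComputation a b (H₁ ++ (replicate k H₂).flatten ++ H₃) w)
    (hi : i ≤ H₁.length + k * H₂.length + H₃.length) :
    norm (w i) ≤ norm (w 0) + norm (w (H₁.length + k * H₂.length + H₃.length)) +
      2 * H₁.length + 3 * H₂.length + 2 * H₃.length := by
  have h₁ := hw.append_left.append_left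
  have h₂ := hw.append_left.append_right
  have h₃ := hw.append_right
  rw [show (H₁ ++ (replicate k H₂).flatten).length = H₁.length + k * H₂.length by simp] at h₃
  have hstart := (h₁.norm_le_norm_add_two_mul_sub hab (Nat.zero_le _) le_rfl).1
  have hend := (h₃.norm_le_norm_add_two_mul_sub hab (Nat.zero_le _) le_rfl).2
  simp only [add_zero, Nat.sub_zero] at hstart hend
  rcases le_or_gt i H₁.length with hi₁ | hi₁
  · have := (h₁.norm_le_norm_add_two_mul_sub hab (Nat.zero_le i) hi₁).1
    omega
  rcases le_or_gt i (H₁.length + k * H₂.length) with hi₂ | hi₂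
  · have := h₂.norm_le_max_of_flatten_replicate hab (i := i - H₁.length) (by omega)
    simp only [add_zero, Nat.add_sub_cancel' hi₁.le] at this
    omega
  · have := (h₃.norm_le_norm_add_two_mul_sub hab (i := i - (H₁.length + k * H₂.length))
      (by omega) le_rfl).2
    simp only [Nat.add_sub_cancel' hi₂.le] at this
    omega

end IsComputation

/-- The `Y`-projection `w` of a computation with a 2-letter base evolves as `w ↦ a r * w * b r`
under the rule `r`, and property (*) says `‖a r‖ ≤ 1` and `‖b r‖ ≤ 1`. -/
theorem sMachine_two_letter_base_length_bound
    {Y R : Type} [DecidableEq Y]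
    (a b : R → FreeGroup Y)
    (hstar : ∀ r, (a r).toWord.length ≤ 1 ∧ (b r).toWord.length ≤ 1)
    (t : ℕ) (w : Fin (t + 1) → FreeGroup Y) (hist : Fin t → R)
    (hstep : ∀ i : Fin t, w i.succ = a (hist i) * w i.castSucc * b (hist i))
    (H1 H2 H3 : List R) (k : ℕ)
    (hH : List.ofFn hist = H1 ++ (List.replicate k H2).flatten ++ H3) :
    ∀ i : Fin (t + 1),
      (w i).toWord.length ≤
        (w 0).toWord.length + (w (Fin.last t)).toWord.length +
          2 * H1.length + 3 * H2.length + 2 * H3.length := by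
  intro i
  have ht : H1.length + k * H2.length + H3.length = t := by
    simpa [add_assoc] using congrArg List.length hH.symm
  let W : ℕ → FreeGroup Y := fun j => w ⟨min j t, by omega⟩
  have hWw (j : Fin (t + 1)) : W j = w j :=
    congrArg w (Fin.ext (min_eq_left (Nat.le_of_lt_succ j.2)))
  have hrun : IsComputation a b (List.ofFn hist) W := by
    intro j hj
    rw [List.length_ofFn] at hj
    simpa [W, min_eq_left hj.le, min_eq_left (Nat.succ_le_of_lt hj)] using hstep ⟨j, hj⟩
  rw [hH] at hrun
  have hbound := hrun.norm_le_of_append_flatten_replicate_append hstar (i := i) (by omega)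
  rwa [ht, hWw i, show W 0 = w 0 from hWw 0, show W t = w (Fin.last t) from hWw (Fin.last t)]
    at hbound
end

section
/- Suppose a necklace O' is obtained from a necklace O by removing one bead v (either white or black). Then card(P_j(O')) ≤ card(P_j(O)) for every j ≥ 1, and consequently μ_J(O') ≤ μ_J(O) for every J ≥ 1. -/
namespace Necklace

/-- A necklace is modelled as a list of bead colours, listed in clockwise order:
`true` is a white bead, `false` a black bead.  Beads are identified with their
indices in the list. -/
def dist (L : List Bool) (i j : ℕ) : ℕ := (j + L.length - i) % L.length

/-- The number of black beads strictly inside the clockwise arc from bead `i` to bead `j`. -/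
def arcBlack (L : List Bool) (i j : ℕ) : ℕ :=
  (List.range (dist L i j)).countP
    (fun k => decide (k ≠ 0 ∧ L.getD ((i + k) % L.length) true = false))

/-- The number of white beads strictly inside the clockwise arc from bead `i` to bead `j`. -/
def arcWhite (L : List Bool) (i j : ℕ) : ℕ :=
  (List.range (dist L i j)).countP
    (fun k => decide (k ≠ 0 ∧ L.getD ((i + k) % L.length) true = true))

/-- The number of white beads of the necklace. -/
def whiteCount (L : List Bool) : ℕ := L.countP (fun x => x)

/-- The set `P_j` of ordered pairs `(o₁, o₂)` of distinct white beads such that the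
clockwise arc from `o₁` to `o₂` contains at least `j` black beads. -/
def Pset (L : List Bool) (j : ℕ) : Finset (ℕ × ℕ) :=
  (Finset.range L.length ×ˢ Finset.range L.length).filter
    (fun p => p.1 ≠ p.2 ∧ L.getD p.1 true = true ∧ L.getD p.2 true = true ∧
      j ≤ arcBlack L p.1 p.2)

/-- The `J`-mixture `μ_J(O) = Σ_{j=1}^J card(P_j)`. -/
def mu (J : ℕ) (L : List Bool) : ℕ := ∑ j ∈ Finset.Icc 1 J, (Pset L j).card

end Necklace

/-!
Index the beads of `L.eraseIdx v` so that bead `x` is bead `succAbove v x` of `L`. This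
injection preserves colours and, seen from any bead, the clockwise order of the other beads;
so it maps the black beads inside a clockwise arc of the smaller necklace injectively to black
beads inside the corresponding arc of `L`. Applied to both ends of a pair, it therefore embeds
`P_j(L.eraseIdx v)` into `P_j(L)`, and summing over `j` gives the bound on the mixture.
-/

open Finset

namespace Necklace

def succAbove (v x : ℕ) : ℕ := if x < v then x else x + 1

theorem succAbove_injective (v : ℕ) : Function.Injective (succAbove v) := by
  intro x y h
  unfold succAbove at h
  split_ifs at h <;> omega

theorem succAbove_lt_succ {v x n : ℕ} (hx : x < n) : succAbove v x < n + 1 := by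
  unfold succAbove; split_ifs <;> omega

theorem succAbove_lt_length {α : Type*} {L : List α} {v x : ℕ}
    (hx : x < (L.eraseIdx v).length) : succAbove v x < L.length := by
  rw [List.length_eraseIdx] at hx
  unfold succAbove
  split_ifs at * <;> omega

theorem getD_eraseIdx {α : Type*} (L : List α) (v x : ℕ) (d : α) :
    (L.eraseIdx v).getD x d = L.getD (succAbove v x) d := by
  simp only [List.getD_eq_getElem?_getD, List.getElem?_eraseIdx, succAbove]
  split_ifs <;> rfl

section dist

variable {L : List Bool} {i j : ℕ}

theorem dist_eq_ite (hi : i < L.length) (hj : j < L.length) :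
    dist L i j = if i ≤ j then j - i else j + L.length - i := by
  unfold dist
  split_ifs with h
  · rw [show j + L.length - i = j - i + L.length by omega, Nat.add_mod_right,
      Nat.mod_eq_of_lt (by omega)]
  · exact Nat.mod_eq_of_lt (by omega)

theorem dist_self (i : ℕ) : dist L i i = 0 := by
  simp [dist]

theorem add_dist_mod (hi : i < L.length) (hj : j < L.length) :
    (i + dist L i j) % L.length = j := by
  rw [dist_eq_ite hi hj]
  split_ifs
  · rw [Nat.add_sub_cancel' (by omega), Nat.mod_eq_of_lt hj]
  · rw [show i + (j + L.length - i) = j + L.length by omega, Nat.add_mod_right,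
      Nat.mod_eq_of_lt hj]

theorem dist_add_mod {k : ℕ} (hi : i < L.length) (hk : k < L.length) :
    dist L i ((i + k) % L.length) = k := by
  have hpos : 0 < L.length := by omega
  rw [dist_eq_ite hi (Nat.mod_lt _ hpos)]
  rcases Nat.lt_or_ge (i + k) L.length with h | h
  · rw [Nat.mod_eq_of_lt h]; simp
  · rw [Nat.mod_eq_sub_mod h, Nat.mod_eq_of_lt (by omega)]
    split_ifs <;> omega

theorem dist_succAbove_lt {L' : List Bool} (hlen : L.length = L'.length + 1) (v : ℕ) {c : ℕ}
    (hi : i < L'.length) (hj : j < L'.length) (hc : c < L'.length)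
    (hcj : dist L' i c < dist L' i j) :
    dist L (succAbove v i) (succAbove v c) < dist L (succAbove v i) (succAbove v j) := by
  have hlt {x : ℕ} (hx : x < L'.length) : succAbove v x < L.length :=
    hlen ▸ succAbove_lt_succ hx
  rw [dist_eq_ite hi hc, dist_eq_ite hi hj] at hcj
  rw [dist_eq_ite (hlt hi) (hlt hc), dist_eq_ite (hlt hi) (hlt hj)]
  unfold succAbove at *
  split_ifs at * <;> omega

end dist

theorem arcBlack_eq_card {L : List Bool} {i : ℕ} (hi : i < L.length) (j : ℕ) :
    arcBlack L i j = #{c ∈ range L.length |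
      c ≠ i ∧ dist L i c < dist L i j ∧ L.getD c true = false} := by
  have hpos : 0 < L.length := by omega
  have hdist_lt (c : ℕ) : dist L i c < L.length := Nat.mod_lt _ hpos
  rw [arcBlack, ← List.nodup_range.card_eq_countP, List.toFinset_range]
  refine card_nbij' (fun k => (i + k) % L.length) (dist L i) ?_ ?_ ?_ ?_
  · intro k hk
    simp only [coe_filter, mem_range, Set.mem_ofPred_eq] at hk ⊢
    obtain ⟨hkj, hk0, hblack⟩ := hk
    have hk : dist L i ((i + k) % L.length) = k := dist_add_mod hi (hkj.trans (hdist_lt j))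
    refine ⟨Nat.mod_lt _ hpos, fun hki => hk0 ?_, by rwa [hk], hblack⟩
    rw [← hk, hki, dist_self]
  · intro c hc
    simp only [coe_filter, mem_range, Set.mem_ofPred_eq] at hc ⊢
    obtain ⟨hcn, hci, hcj, hblack⟩ := hc
    refine ⟨hcj, fun h0 => hci ?_, by rwa [add_dist_mod hi hcn]⟩
    rw [← add_dist_mod hi hcn, h0, add_zero, Nat.mod_eq_of_lt hi]
  · intro k hk
    simp only [coe_filter, mem_range, Set.mem_ofPred_eq] at hk
    exact dist_add_mod hi (hk.1.trans (hdist_lt j))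
  · intro c hc
    simp only [coe_filter, mem_range, Set.mem_ofPred_eq] at hc
    exact add_dist_mod hi hc.1

theorem arcBlack_eraseIdx_le {L : List Bool} {v : ℕ} (hv : v < L.length) {i j : ℕ}
    (hi : i < (L.eraseIdx v).length) (hj : j < (L.eraseIdx v).length) :
    arcBlack (L.eraseIdx v) i j ≤ arcBlack L (succAbove v i) (succAbove v j) := by
  rw [arcBlack_eq_card hi, arcBlack_eq_card (succAbove_lt_length hi)]
  refine card_le_card_of_injOn (succAbove v) ?_ (succAbove_injective v).injOn
  intro c hc
  simp only [coe_filter, mem_range, Set.mem_ofPred_eq] at hc ⊢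
  obtain ⟨hcn, hci, hcj, hblack⟩ := hc
  rw [getD_eraseIdx] at hblack
  exact ⟨succAbove_lt_length hcn, (succAbove_injective v).ne hci,
    dist_succAbove_lt (List.length_eraseIdx_add_one hv).symm v hi hj hcn hcj, hblack⟩

theorem card_Pset_eraseIdx_le {L : List Bool} {v : ℕ} (hv : v < L.length) (j : ℕ) :
    #(Pset (L.eraseIdx v) j) ≤ #(Pset L j) := by
  have hinj := (succAbove_injective v).prodMap (succAbove_injective v)
  refine card_le_card_of_injOn (Prod.map (succAbove v) (succAbove v)) ?_ hinj.injOn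
  rintro ⟨a, b⟩ hab
  simp only [Pset, coe_filter, mem_product, mem_range, Set.mem_ofPred_eq, Prod.map] at hab ⊢
  obtain ⟨⟨ha, hb⟩, hne, hwa, hwb, harc⟩ := hab
  rw [getD_eraseIdx] at hwa hwb
  exact ⟨⟨succAbove_lt_length ha, succAbove_lt_length hb⟩, (succAbove_injective v).ne hne,
    hwa, hwb, harc.trans (arcBlack_eraseIdx_le hv ha hb)⟩

theorem mu_eraseIdx_le {L : List Bool} {v : ℕ} (hv : v < L.length) (J : ℕ) :
    mu J (L.eraseIdx v) ≤ mu J L :=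
  sum_le_sum fun j _ => card_Pset_eraseIdx_le hv j

end Necklace

/-- Removing one bead (white or black) from a necklace does not increase any of the
sets `P_j`, and hence does not increase the `J`-mixture. -/
theorem necklace_mixture_remove_bead (L : List Bool) (v : ℕ) (hv : v < L.length) :
    (∀ j : ℕ, 1 ≤ j →
        (Necklace.Pset (L.eraseIdx v) j).card ≤ (Necklace.Pset L j).card) ∧
    (∀ J : ℕ, 1 ≤ J → Necklace.mu J (L.eraseIdx v) ≤ Necklace.mu J L) :=
  ⟨fun j _ => Necklace.card_Pset_eraseIdx_le hv j, fun J _ => Necklace.mu_eraseIdx_le hv J⟩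
end
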